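/- arXiv:2402.01414 — 2 statements merged into one kernel-verified Lean document; each statement's English description precedes it below -/
import Mathlib

section
/- Let L be a distributive lattice, A a nonempty set, n ≥ 2, and T : L^n → A a map. Then T is total orderization invariant if and only if for every m ∈ {2,...,n} and all x_1,...,x_n ∈ L, T(x_1,...,x_n) = T(M_1(x_1,...,x_m),...,M_m(x_1,...,x_m), x_{m+1},...,x_n), where the medians are computed with respect to the first m arguments. -/
def median {L : Type*} [DistribLattice L] {n : ℕ} (k : ℕ) (hk1 : 1 ≤ k) (hkn : k ≤ n)
    (x : Fin n → L) : L :=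
  ((Finset.univ.powersetCard (n + 1 - k)).attach).sup'
    (Finset.attach_nonempty_iff.mpr
      (Finset.powersetCard_nonempty.mpr (by simp [Finset.card_univ]; omega)))
    fun s => s.1.inf'
      (Finset.card_pos.mp (by
        have h := (Finset.mem_powersetCard.mp s.2).2
        omega)) x

def medianInf {L : Type*} [DistribLattice L] {n : ℕ} (k : ℕ) (hk1 : 1 ≤ k) (hkn : k ≤ n)
    (x : Fin n → L) : L :=
  ((Finset.univ.powersetCard (n + 1 - k)).attach).inf'
    (Finset.attach_nonempty_iff.mpr
      (Finset.powersetCard_nonempty.mpr (by simp [Finset.card_univ]; omega)))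
    fun s => s.1.sup'
      (Finset.card_pos.mp (by
        have h := (Finset.mem_powersetCard.mp s.2).2
        omega)) x
def TotalOrderizationInvariant {L : Type*} [DistribLattice L] {A : Type*} {n : ℕ}
    (T : (Fin n → L) → A) : Prop :=
  ∀ x : Fin n → L,
    T x = T fun k => median (k.1 + 1) (Nat.succ_le_succ (Nat.zero_le _)) k.2 x

/-- `T` is symmetric: invariant under every permutation of its arguments. -/
def IsSymmetricMap {L A : Type*} {n : ℕ} (T : (Fin n → L) → A) : Prop :=
  ∀ (σ : Equiv.Perm (Fin n)) (x : Fin n → L), T (x ∘ σ) = T x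

/-!
By the prime ideal theorem, lattice homomorphisms `L → Prop` separate the points of a
distributive lattice, and they commute with the medians. For a vector of propositions the
`k`-th median only says that at least `n + 1 - k` entries hold, so totally orderizing it sorts
it while keeping the number of true entries; orderizing a prefix keeps that number as well.
Hence orderizing a prefix does not change the total orderization, and total orderization
invariance gives `T x = T (M x) = T (M x') = T x'`, where `M` is total orderization and `x'` is
`x` with a prefix orderized.
Conversely, the prefix of length `n` is the whole vector.
-/

open Finset

namespace Order.Ideal.IsPrime

variable {L : Type*} [DistribLattice L] {J : Order.Ideal L}

def notMemHom (hJ : J.IsPrime) : LatticeHom L Prop where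
  toFun x := x ∉ J
  map_sup' x y := by simp only [sup_mem_iff, sup_Prop_eq, not_and_or]
  map_inf' x y := propext <| by
    simp only [inf_Prop_eq, ← not_or]
    exact not_congr ⟨hJ.mem_or_mem, fun h => h.elim (J.lower inf_le_left) (J.lower inf_le_right)⟩

end Order.Ideal.IsPrime

section Separation

variable {L : Type*} [DistribLattice L]

open Order in
lemma exists_latticeHom_prop_of_not_le {a b : L} (h : ¬ a ≤ b) :
    ∃ f : LatticeHom L Prop, f a ∧ ¬ f b := by
  have hdisj : Disjoint (PFilter.principal a : Set L) (Ideal.principal b : Set L) :=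
    Set.disjoint_left.mpr fun x hax hxb =>
      h ((PFilter.mem_principal.mp hax).trans (Ideal.mem_principal.mp hxb))
  obtain ⟨J, hJ, hbJ, haJ⟩ := DistribLattice.prime_ideal_of_disjoint_filter_ideal hdisj
  exact ⟨hJ.notMemHom, Set.disjoint_left.mp haJ (PFilter.mem_principal.mpr le_rfl),
    not_not.mpr (hbJ (Ideal.mem_principal.mpr le_rfl))⟩

lemma eq_of_forall_latticeHom_prop {a b : L} (h : ∀ f : LatticeHom L Prop, f a = f b) :
    a = b := by
  refine le_antisymm (not_not.mp fun hab => ?_) (not_not.mp fun hba => ?_)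
  · obtain ⟨f, hfa, hfb⟩ := exists_latticeHom_prop_of_not_le hab
    exact hfb (h f ▸ hfa)
  · obtain ⟨f, hfb, hfa⟩ := exists_latticeHom_prop_of_not_le hba
    exact hfa (h f ▸ hfb)

end Separation

section Orderization

variable {L M : Type*} [DistribLattice L] [DistribLattice M] {n m : ℕ}

/-- `orderization x k` is the paper's `M_{k+1}(x_1, …, x_n)`: indices are shifted by one. -/
def orderization (x : Fin n → L) : Fin n → L :=
  fun k => median (k.1 + 1) (Nat.succ_le_succ (Nat.zero_le _)) k.2 x

def prefixOrderization (hm : m ≤ n) (x : Fin n → L) : Fin n → L :=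
  fun k => if h : k.1 < m then orderization (fun i : Fin m => x (Fin.castLE hm i)) ⟨k, h⟩ else x k

lemma map_median (f : LatticeHom L M) (k : ℕ) (hk1 : 1 ≤ k) (hkn : k ≤ n) (x : Fin n → L) :
    f (median k hk1 hkn x) = median k hk1 hkn (f ∘ x) := by
  rw [median, map_finset_sup']
  exact sup'_congr _ rfl fun s _ => map_finset_inf' f _ x

lemma comp_orderization (f : LatticeHom L M) (x : Fin n → L) :
    f ∘ orderization x = orderization (f ∘ x) :=
  funext fun _ => map_median f _ _ _ x

lemma comp_prefixOrderization (f : LatticeHom L M) (hm : m ≤ n) (x : Fin n → L) :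
    f ∘ prefixOrderization hm x = prefixOrderization hm (f ∘ x) := by
  funext k
  by_cases h : k.1 < m
  · simp only [Function.comp_apply, prefixOrderization, dif_pos h]
    exact congrFun (comp_orderization f _) _
  · simp only [Function.comp_apply, prefixOrderization, dif_neg h]

lemma prefixOrderization_self (x : Fin n → L) : prefixOrderization le_rfl x = orderization x :=
  funext fun k => by simp [prefixOrderization, k.2]

open scoped Classical in
lemma median_prop_iff (k : ℕ) (hk1 : 1 ≤ k) (hkn : k ≤ n) (y : Fin n → Prop) :
    median k hk1 hkn y ↔ n + 1 - k ≤ #{i | y i} := by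
  rw [le_card_iff_exists_subset_card]
  simp only [median, inf'_eq_inf, Finset.inf_eq_iInf, iInf_Prop_eq, sup'_eq_sup,
    Finset.sup_eq_iSup, mem_attach, iSup_pos, iSup_Prop_eq, Subtype.exists, mem_powersetCard,
    subset_iff, mem_univ, implies_true, true_and, exists_prop, mem_filter]
  exact exists_congr fun s => by tauto

end Orderization

section Counting

open scoped Classical

variable {n m : ℕ}

lemma orderization_prop_iff (y : Fin n → Prop) (k : Fin n) :
    orderization y k ↔ n - #{i | y i} ≤ k := by
  have hc : #{i | y i} ≤ n := card_le_univ _ |>.trans_eq (Fintype.card_fin n)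
  rw [orderization, median_prop_iff]
  omega

lemma card_orderization_prop (y : Fin n → Prop) : #{k | orderization y k} = #{i | y i} := by
  have hc : #{i | y i} ≤ n := card_le_univ _ |>.trans_eq (Fintype.card_fin n)
  have hsplit := card_filter_add_card_filter_not (s := univ)
    (p := fun k : Fin n => (k : ℕ) < n - #{i | y i})
  simp only [Fin.card_filter_val_lt, card_univ, Fintype.card_fin, not_lt,
    ← orderization_prop_iff] at hsplit
  omega

lemma card_filter_castLE (hm : m ≤ n) (p : Fin n → Prop) :
    #{j : Fin m | p (Fin.castLE hm j)} = #{k : Fin n | p k ∧ k < m} := by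
  rw [← card_map (Fin.castLEEmb hm)]
  congr 1
  ext k
  simp only [mem_map, mem_filter_univ, Fin.coe_castLEEmb]
  constructor
  · rintro ⟨j, hj, rfl⟩
    exact ⟨hj, j.2⟩
  · rintro ⟨hk', hk⟩
    exact ⟨⟨k, hk⟩, hk', rfl⟩

lemma card_filter_eq_of_eq_on_prefix (hm : m ≤ n) {p q : Fin n → Prop}
    (hpre : #{j : Fin m | p (Fin.castLE hm j)} = #{j : Fin m | q (Fin.castLE hm j)})
    (hsuf : ∀ k : Fin n, m ≤ k → (p k ↔ q k)) :
    #{k | p k} = #{k | q k} := by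
  rw [← card_filter_add_card_filter_not (p := fun k : Fin n => (k : ℕ) < m),
    ← card_filter_add_card_filter_not (s := {k | q k}) (p := fun k : Fin n => (k : ℕ) < m),
    filter_filter, filter_filter, filter_filter, filter_filter,
    ← card_filter_castLE hm, ← card_filter_castLE hm, hpre]
  congr 2 with k
  simpa only [mem_filter_univ] using and_congr_left fun hk => hsuf k (not_lt.mp hk)

lemma card_prefixOrderization_prop (hm : m ≤ n) (y : Fin n → Prop) :
    #{k | prefixOrderization hm y k} = #{i | y i} := by
  refine card_filter_eq_of_eq_on_prefix hm ?_ fun k hk => ?_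
  · simpa [prefixOrderization] using card_orderization_prop _
  · simp [prefixOrderization, not_lt.mpr hk]

lemma orderization_prefixOrderization_prop (hm : m ≤ n) (y : Fin n → Prop) :
    orderization (prefixOrderization hm y) = orderization y := by
  funext k
  rw [eq_iff_iff, orderization_prop_iff, orderization_prop_iff, card_prefixOrderization_prop]

end Counting

lemma orderization_prefixOrderization {L : Type*} [DistribLattice L] {n m : ℕ} (hm : m ≤ n)
    (x : Fin n → L) : orderization (prefixOrderization hm x) = orderization x := by
  funext k
  refine eq_of_forall_latticeHom_prop fun f => ?_
  have h := congrFun (orderization_prefixOrderization_prop hm (f ∘ x)) k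
  rwa [← comp_prefixOrderization, ← comp_orderization, ← comp_orderization] at h

theorem toi_iff_partial_toi_general {L A : Type*} [DistribLattice L]
    {n : ℕ} (hn : 2 ≤ n) (T : (Fin n → L) → A) :
    TotalOrderizationInvariant T ↔
      ∀ (m : ℕ) (_ : 2 ≤ m) (hm : m ≤ n) (x : Fin n → L),
        T x = T (fun k =>
          if h : k.1 < m then
            median (k.1 + 1) (Nat.succ_le_succ (Nat.zero_le _)) h
              (fun i : Fin m => x (Fin.castLE hm i))
          else x k) := by
  change (∀ x, T x = T (orderization x)) ↔
    ∀ (m : ℕ) (_ : 2 ≤ m) (hm : m ≤ n) (x : Fin n → L), T x = T (prefixOrderization hm x)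
  refine ⟨fun hT m _ hm x => ?_, fun hT x => ?_⟩
  · rw [hT x, hT (prefixOrderization hm x), orderization_prefixOrderization]
  · simpa only [prefixOrderization_self] using hT n hn le_rfl x

/-- A map on n ≥ 2 variables is total orderization invariant iff for every 2 ≤ m ≤ n it
is invariant under total orderization of its first m arguments. -/
theorem toi_iff_partial_toi {L A : Type*} [DistribLattice L] [Nonempty A]
    {n : ℕ} (hn : 2 ≤ n) (T : (Fin n → L) → A) :
    TotalOrderizationInvariant T ↔
      ∀ (m : ℕ) (_ : 2 ≤ m) (hm : m ≤ n) (x : Fin n → L),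
        T x = T (fun k =>
          if h : k.1 < m then
            median (k.1 + 1) (Nat.succ_le_succ (Nat.zero_le _)) h
              (fun i : Fin m => x (Fin.castLE hm i))
          else x k) :=
  toi_iff_partial_toi_general hn T
end

section
/- Let L and M be distributive lattices, n ≥ 2, and T : L^n → M a lattice n-homomorphism. Then T is total orderization invariant if and only if T is symmetric. -/
/-- `T : Lⁿ → M` is a lattice n-homomorphism: in each coordinate separately it
preserves binary joins and binary meets. -/
def IsLatticeMultiHom {L M : Type*} [DistribLattice L] [DistribLattice M] {n : ℕ}
    (T : (Fin n → L) → M) : Prop :=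
  ∀ (x : Fin n → L) (i : Fin n) (y : L),
    T (Function.update x i (x i ⊔ y)) = T x ⊔ T (Function.update x i y) ∧
    T (Function.update x i (x i ⊓ y)) = T x ⊓ T (Function.update x i y)

/-- `P : L → M` is a lattice homomorphism. -/
def IsLatticeHomMap {L M : Type*} [DistribLattice L] [DistribLattice M] (P : L → M) : Prop :=
  ∀ a b : L, P (a ⊔ b) = P a ⊔ P b ∧ P (a ⊓ b) = P a ⊓ P b

/-! Symmetric implies invariant: a comparator `(x i, x j) ↦ (x i ⊓ x j, x i ⊔ x j)` with `i < j`
changes neither a symmetric lattice n-homomorphism nor any median, and finitely many comparators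
(a selection sort) turn every tuple into a monotone one, which is its own tuple of medians.
For `T`, freezing the other coordinates leaves a symmetric map of two variables that is a lattice
homomorphism in each of them. For a median, the join of the meets of `x` over `S` and over the
image of `S` under `swap i j` depends on `(x i, x j)` only through `x i ⊓ x j` and `x i ⊔ x j`.
Conversely, invariance implies symmetry because every median is a symmetric function. -/

open Function Finset Equiv

section Comparator

variable {L : Type*} [Lattice L] {n : ℕ}

def comparator (i j : Fin n) (x : Fin n → L) : Fin n → L :=
  update (update x i (x i ⊓ x j)) j (x i ⊔ x j)

variable {i j : Fin n}

lemma comparator_apply_left (hij : i ≠ j) (x : Fin n → L) :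
    comparator i j x i = x i ⊓ x j := by
  rw [comparator, update_of_ne hij, update_self]

lemma comparator_apply_right (x : Fin n → L) : comparator i j x j = x i ⊔ x j :=
  update_self ..

lemma comparator_apply_of_ne {e : Fin n} (hei : e ≠ i) (hej : e ≠ j) (x : Fin n → L) :
    comparator i j x e = x e := by
  rw [comparator, update_of_ne hej, update_of_ne hei]

lemma le_comparator {a : L} {x : Fin n → L} (hx : ∀ e, a ≤ x e) (e : Fin n) :
    a ≤ comparator i j x e := by
  simp only [comparator, update_apply]
  split_ifs
  exacts [le_sup_of_le_left (hx i), le_inf (hx i) (hx j), hx e]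

lemma cons_comparator (a : L) (x : Fin n → L) :
    (Fin.cons a (comparator i j x) : Fin (n + 1) → L) =
      comparator i.succ j.succ (Fin.cons a x) := by
  simp only [comparator, Fin.cons_update, Fin.cons_succ]

def ComparatorReach : (Fin n → L) → (Fin n → L) → Prop :=
  Relation.ReflTransGen fun x y => ∃ i j, i < j ∧ y = comparator i j x

namespace ComparatorReach

variable {x y : Fin n → L}

lemma tail_comparator (h : ComparatorReach x y) (hij : i < j) :
    ComparatorReach x (comparator i j y) :=
  Relation.ReflTransGen.tail h ⟨i, j, hij, rfl⟩

lemma trans {z : Fin n → L} (hxy : ComparatorReach x y) (hyz : ComparatorReach y z) :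
    ComparatorReach x z :=
  Relation.ReflTransGen.trans hxy hyz

lemma invariant {P : (Fin n → L) → Prop}
    (hP : ∀ i j x, i < j → P x → P (comparator i j x)) (h : ComparatorReach x y) (hx : P x) :
    P y := by
  induction h with
  | refl => exact hx
  | tail _ hstep ih =>
    obtain ⟨i, j, hij, rfl⟩ := hstep
    exact hP i j _ hij ih

lemma map_eq {α : Type*} {f : (Fin n → L) → α}
    (hf : ∀ i j x, i < j → f (comparator i j x) = f x) (h : ComparatorReach x y) : f x = f y :=
  h.invariant (P := fun z => f x = f z) (fun i j z hij hz => hz.trans (hf i j z hij).symm) rfl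

lemma cons (a : L) (h : ComparatorReach x y) :
    ComparatorReach (Fin.cons a x : Fin (n + 1) → L) (Fin.cons a y) := by
  refine Relation.ReflTransGen.lift _ (fun x y hxy => ?_) _ _ h
  obtain ⟨i, j, hij, rfl⟩ := hxy
  exact ⟨i.succ, j.succ, Fin.succ_lt_succ_iff.mpr hij, cons_comparator a x⟩

end ComparatorReach

lemma exists_comparatorReach_zero_le (x : Fin (n + 1) → L) (U : Finset (Fin (n + 1))) :
    ∃ z, ComparatorReach x z ∧ ∀ j ∈ U, z 0 ≤ z j := by
  induction U using Finset.induction_on with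
  | empty => exact ⟨x, .refl, by simp⟩
  | insert r U _ ih =>
    obtain ⟨z, hxz, hz⟩ := ih
    rcases eq_or_ne r 0 with rfl | hr
    · exact ⟨z, hxz, by simpa using hz⟩
    refine ⟨comparator 0 r z, hxz.tail_comparator (Fin.pos_iff_ne_zero.mpr hr), ?_⟩
    intro j hj
    rw [comparator_apply_left hr.symm]
    rcases eq_or_ne j r with rfl | hjr
    · rw [comparator_apply_right]
      exact inf_le_sup
    rcases eq_or_ne j 0 with rfl | hj0
    · rw [comparator_apply_left hr.symm]
    · rw [comparator_apply_of_ne hj0 hjr]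
      exact inf_le_left.trans (hz j (mem_of_mem_insert_of_ne hj hjr))

lemma Fin.monotone_cons {α : Type*} [Preorder α] {a : α} {f : Fin n → α}
    (ha : ∀ e, a ≤ f e) (hf : Monotone f) : Monotone (Fin.cons a f : Fin (n + 1) → α) := by
  cases n with
  | zero => intro p q _; rw [Fin.subsingleton_one.elim p q]
  | succ n => exact hf.vecCons (ha 0)

theorem exists_comparatorReach_monotone (x : Fin n → L) :
    ∃ y, ComparatorReach x y ∧ Monotone y := by
  induction n with
  | zero => exact ⟨x, .refl, Subsingleton.monotone x⟩
  | succ n ih =>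
    obtain ⟨z, hxz, hz⟩ := exists_comparatorReach_zero_le x univ
    obtain ⟨y, hzy, hy⟩ := ih (Fin.tail z)
    have hzy_low : ∀ e, z 0 ≤ y e :=
      hzy.invariant (P := fun w => ∀ e, z 0 ≤ w e) (fun _ _ _ _ => le_comparator)
        fun e => hz e.succ (mem_univ _)
    refine ⟨Fin.cons (z 0) y, hxz.trans ?_, Fin.monotone_cons hzy_low hy⟩
    simpa only [Fin.cons_self_tail] using hzy.cons (z 0)

end Comparator

section InfPair

variable {ι L : Type*} [DistribLattice L] {S : Finset ι} {i j : ι}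

lemma inf'_le_inf'_of_inf_le {z w : ι → L} (hS : S.Nonempty) (hi : i ∈ S) (hj : j ∈ S)
    (hzw : ∀ e, e ≠ i → e ≠ j → z e = w e) (h : z i ⊓ z j ≤ w i ⊓ w j) :
    S.inf' hS z ≤ S.inf' hS w := by
  have hzij : S.inf' hS z ≤ w i ⊓ w j := (le_inf (inf'_le _ hi) (inf'_le _ hj)).trans h
  refine le_inf' _ _ fun e he => ?_
  rcases eq_or_ne e i with rfl | hei
  · exact hzij.trans inf_le_left
  rcases eq_or_ne e j with rfl | hej
  · exact hzij.trans inf_le_right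
  · exact (inf'_le _ he).trans_eq (hzw e hei hej)

lemma inf'_eq_inf'_of_inf_eq {z w : ι → L} (hS : S.Nonempty) (hi : i ∈ S) (hj : j ∈ S)
    (hzw : ∀ e, e ≠ i → e ≠ j → z e = w e) (h : z i ⊓ z j = w i ⊓ w j) :
    S.inf' hS z = S.inf' hS w :=
  le_antisymm (inf'_le_inf'_of_inf_le hS hi hj hzw h.le)
    (inf'_le_inf'_of_inf_le hS hi hj (fun e hei hej => (hzw e hei hej).symm) h.ge)

variable [DecidableEq ι]

lemma inf'_update_sup (hS : S.Nonempty) (hi : i ∈ S) (z : ι → L) (a b : L) :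
    S.inf' hS (update z i (a ⊔ b)) = S.inf' hS (update z i a) ⊔ S.inf' hS (update z i b) := by
  rcases (S.erase i).eq_empty_or_nonempty with hE | hE
  · obtain rfl : S = {i} := by
      rw [← insert_erase hi, hE]; rfl
    simp
  · have key : ∀ c, S.inf' hS (update z i c) = c ⊓ (S.erase i).inf' hE z := by
      intro c
      rw [inf'_congr hS (insert_erase hi).symm fun _ _ => rfl, inf'_insert (H := hE), update_self]
      congr 1
      exact inf'_congr hE rfl fun e he => update_of_ne (ne_of_mem_erase he) _ _
    rw [key, key, key, inf_sup_right]

lemma inf'_sup_inf'_comp_swap (hS : S.Nonempty) (hi : i ∈ S) (hj : j ∉ S) (z : ι → L) :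
    S.inf' hS z ⊔ S.inf' hS (z ∘ swap i j) = S.inf' hS (update z i (z i ⊔ z j)) := by
  rw [inf'_update_sup hS hi, update_eq_self]
  congr 1
  refine inf'_congr _ rfl fun e he => ?_
  rcases eq_or_ne e i with rfl | hei
  · simp
  · rw [comp_apply, swap_apply_of_ne_of_ne hei (ne_of_mem_of_not_mem he hj), update_of_ne hei]

lemma inf'_sup_inf'_comp_swap_congr_of_notMem {z w : ι → L} (hS : S.Nonempty) (hi : i ∈ S)
    (hj : j ∉ S) (hzw : ∀ e, e ≠ i → e ≠ j → z e = w e) (hsup : z i ⊔ z j = w i ⊔ w j) :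
    S.inf' hS z ⊔ S.inf' hS (z ∘ swap i j) = S.inf' hS w ⊔ S.inf' hS (w ∘ swap i j) := by
  rw [inf'_sup_inf'_comp_swap hS hi hj, inf'_sup_inf'_comp_swap hS hi hj, hsup]
  refine inf'_congr hS rfl fun e he => ?_
  rcases eq_or_ne e i with rfl | hei
  · simp only [update_self]
  · rw [update_of_ne hei, update_of_ne hei, hzw e hei (ne_of_mem_of_not_mem he hj)]

lemma inf'_sup_inf'_comp_swap_congr {z w : ι → L} (hS : S.Nonempty)
    (hzw : ∀ e, e ≠ i → e ≠ j → z e = w e) (hinf : z i ⊓ z j = w i ⊓ w j)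
    (hsup : z i ⊔ z j = w i ⊔ w j) :
    S.inf' hS z ⊔ S.inf' hS (z ∘ swap i j) = S.inf' hS w ⊔ S.inf' hS (w ∘ swap i j) := by
  have hswap : ∀ e, e ≠ i → e ≠ j → (z ∘ swap i j) e = (w ∘ swap i j) e := fun e hei hej => by
    rw [comp_apply, comp_apply, swap_apply_of_ne_of_ne hei hej, hzw e hei hej]
  by_cases hi : i ∈ S <;> by_cases hj : j ∈ S
  · congr 1
    · exact inf'_eq_inf'_of_inf_eq hS hi hj hzw hinf
    · refine inf'_eq_inf'_of_inf_eq hS hi hj hswap ?_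
      simp only [comp_apply, swap_apply_left, swap_apply_right, inf_comm (z j), inf_comm (w j),
        hinf]
  · exact inf'_sup_inf'_comp_swap_congr_of_notMem hS hi hj hzw hsup
  · rw [swap_comm]
    exact inf'_sup_inf'_comp_swap_congr_of_notMem hS hj hi (fun e hej hei => hzw e hei hej)
      (by rw [sup_comm, hsup, sup_comm])
  · have hS_off : ∀ e ∈ S, e ≠ i ∧ e ≠ j := fun e he =>
      ⟨ne_of_mem_of_not_mem he hi, ne_of_mem_of_not_mem he hj⟩
    congr 1 <;> refine inf'_congr hS rfl fun e he => ?_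
    exacts [hzw e (hS_off e he).1 (hS_off e he).2, hswap e (hS_off e he).1 (hS_off e he).2]

end InfPair

section Median

variable {L : Type*} [DistribLattice L] {n k : ℕ} {hk1 : 1 ≤ k} {hkn : k ≤ n}

lemma inf'_le_median {S : Finset (Fin n)} (hS : S.Nonempty) (hcard : #S = n + 1 - k)
    (x : Fin n → L) : S.inf' hS x ≤ median k hk1 hkn x :=
  le_sup'_of_le _ (mem_attach _ ⟨S, mem_powersetCard_univ.mpr hcard⟩) le_rfl

lemma median_le {x : Fin n → L} {c : L}
    (h : ∀ S : Finset (Fin n), ∀ hS : S.Nonempty, #S = n + 1 - k → S.inf' hS x ≤ c) :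
    median k hk1 hkn x ≤ c :=
  sup'_le _ _ fun s _ => h s.1 _ (mem_powersetCard_univ.mp s.2)

lemma median_comp_perm (σ : Perm (Fin n)) (x : Fin n → L) :
    median k hk1 hkn (x ∘ σ) = median k hk1 hkn x := by
  suffices h : ∀ (σ : Perm (Fin n)) x, median k hk1 hkn (x ∘ σ) ≤ median k hk1 hkn x by
    refine le_antisymm (h σ x) ?_
    simpa [comp_assoc] using h σ⁻¹ (x ∘ σ)
  intro σ x
  refine median_le fun S hS hcard => ?_
  calc S.inf' hS (x ∘ σ)
    _ = (S.map σ.toEmbedding).inf' hS.map x := by rw [inf'_map]; rfl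
    _ ≤ median k hk1 hkn x := inf'_le_median _ (by rw [card_map, hcard]) x

lemma median_of_monotone {y : Fin n → L} (hy : Monotone y) (k : Fin n) :
    median (k.1 + 1) (Nat.succ_le_succ (Nat.zero_le _)) k.2 y = y k := by
  refine le_antisymm (median_le fun S hS hcard => ?_) ?_
  · obtain ⟨e, heS, hek⟩ : ∃ e ∈ S, e ≤ k := by
      by_contra! hc
      have := card_le_card fun e he => mem_Ioi.mpr (hc e he)
      rw [hcard, Fin.card_Ioi] at this
      omega
    exact (inf'_le _ heS).trans (hy hek)
  · refine le_trans ?_ (inf'_le_median ⟨k, mem_Ici.mpr le_rfl⟩ (by rw [Fin.card_Ici]; omega) y)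
    exact le_inf' _ _ fun e he => hy (mem_Ici.mp he)

lemma median_le_median_of_inf_sup_eq {i j : Fin n} {z w : Fin n → L}
    (hzw : ∀ e, e ≠ i → e ≠ j → z e = w e) (hinf : z i ⊓ z j = w i ⊓ w j)
    (hsup : z i ⊔ z j = w i ⊔ w j) : median k hk1 hkn w ≤ median k hk1 hkn z := by
  refine median_le fun S hS hcard => ?_
  calc S.inf' hS w ≤ S.inf' hS w ⊔ S.inf' hS (w ∘ swap i j) := le_sup_left
    _ = S.inf' hS z ⊔ S.inf' hS (z ∘ swap i j) :=
      (inf'_sup_inf'_comp_swap_congr hS hzw hinf hsup).symm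
    _ ≤ median k hk1 hkn z :=
      sup_le (inf'_le_median hS hcard z)
        ((inf'_le_median hS hcard _).trans_eq (median_comp_perm _ z))

lemma median_comparator {i j : Fin n} (hij : i ≠ j) (x : Fin n → L) :
    median k hk1 hkn (comparator i j x) = median k hk1 hkn x := by
  have hzw : ∀ e, e ≠ i → e ≠ j → x e = comparator i j x e :=
    fun e hei hej => (comparator_apply_of_ne hei hej x).symm
  have hinf : x i ⊓ x j = comparator i j x i ⊓ comparator i j x j := by
    rw [comparator_apply_left hij, comparator_apply_right, inf_eq_left.mpr inf_le_sup]
  have hsup : x i ⊔ x j = comparator i j x i ⊔ comparator i j x j := by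
    rw [comparator_apply_left hij, comparator_apply_right, sup_eq_right.mpr inf_le_sup]
  exact le_antisymm (median_le_median_of_inf_sup_eq hzw hinf hsup)
    (median_le_median_of_inf_sup_eq (fun e hei hej => (hzw e hei hej).symm) hinf.symm hsup.symm)

end Median

lemma update_update_comp_swap {ι α : Type*} [DecidableEq ι] {i j : ι} (hij : i ≠ j)
    (x : ι → α) (p q : α) :
    update (update x i p) j q ∘ swap i j = update (update x i q) j p := by
  ext e
  rcases eq_or_ne e i with rfl | hei
  · simp [update_of_ne hij]
  rcases eq_or_ne e j with rfl | hej
  · simp [update_of_ne hij]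
  · simp [swap_apply_of_ne_of_ne hei hej, update_of_ne hei, update_of_ne hej]

section MultiHom

variable {L M : Type*} [DistribLattice L] [DistribLattice M]

lemma map_inf_sup_of_symm {F : L → L → M} (hF : ∀ q, IsLatticeHomMap (F · q))
    (hsymm : ∀ p q, F p q = F q p) (a b : L) : F (a ⊓ b) (a ⊔ b) = F a b := by
  have map_sup : ∀ p p' q, F (p ⊔ p') q = F p q ⊔ F p' q := fun p p' q => (hF q p p').1
  have map_inf : ∀ p p' q, F (p ⊓ p') q = F p q ⊓ F p' q := fun p p' q => (hF q p p').2
  have hsup : F (a ⊔ b) (a ⊓ b) = F a b ⊓ (F a a ⊔ F b b) := by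
    rw [map_sup, hsymm a, hsymm b, map_inf, map_inf, hsymm b a, inf_sup_left, inf_comm]
  have hinf : F (a ⊓ b) (a ⊔ b) = F a b ⊔ (F a a ⊓ F b b) := by
    rw [map_inf, hsymm a, hsymm b, map_sup, map_sup, hsymm b a, sup_inf_left, sup_comm]
  refine le_antisymm ?_ (hinf ▸ le_sup_left)
  rw [hsymm, hsup]
  exact inf_le_left

variable {n : ℕ} {T : (Fin n → L) → M}

lemma IsLatticeMultiHom.isLatticeHomMap_update (hT : IsLatticeMultiHom T) (x : Fin n → L)
    (i : Fin n) : IsLatticeHomMap fun a => T (update x i a) := fun a b => by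
  simpa only [update_self, update_idem] using hT (update x i a) i b

lemma IsLatticeMultiHom.map_comparator (hT : IsLatticeMultiHom T) (hsym : IsSymmetricMap T)
    {i j : Fin n} (hij : i ≠ j) (x : Fin n → L) : T (comparator i j x) = T x := by
  have h := map_inf_sup_of_symm (F := fun p q => T (update (update x i p) j q))
    (fun q => by simpa only [update_comm hij] using hT.isLatticeHomMap_update (update x j q) i)
    (fun p q => by rw [← update_update_comp_swap hij, hsym]) (x i) (x j)
  rw [comparator]
  simpa only [update_eq_self] using h

end MultiHom

theorem multiHom_toi_iff_symmetric_general {L M : Type*} [DistribLattice L] [DistribLattice M]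
    {n : ℕ} (T : (Fin n → L) → M) (hT : IsLatticeMultiHom T) :
    TotalOrderizationInvariant T ↔ IsSymmetricMap T := by
  constructor
  · intro hTOI σ x
    rw [hTOI (x ∘ σ), hTOI x]
    simp only [median_comp_perm]
  · intro hsym x
    obtain ⟨y, hxy, hy⟩ := exists_comparatorReach_monotone x
    have hmedian : (fun k : Fin n => median (k.1 + 1) (Nat.succ_le_succ (Nat.zero_le _)) k.2 x)
        = y := by
      funext k
      rw [← median_of_monotone hy k]
      exact hxy.map_eq fun i j z hij => median_comparator hij.ne z
    rw [hmedian]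
    exact hxy.map_eq fun i j z hij => hT.map_comparator hsym hij.ne z

/-- A lattice n-homomorphism between distributive lattices is total orderization
invariant iff it is symmetric. -/
theorem multiHom_toi_iff_symmetric {L M : Type*} [DistribLattice L] [DistribLattice M]
    {n : ℕ} (hn : 2 ≤ n) (T : (Fin n → L) → M) (hT : IsLatticeMultiHom T) :
    TotalOrderizationInvariant T ↔ IsSymmetricMap T :=
  multiHom_toi_iff_symmetric_general T hT
end
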